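/- Let (R, m) be a one-dimensional Cohen-Macaulay local ring with fractional canonical ideal K, which is not Gorenstein, and set S = R[K] and 𝔠 = R : S. Then R/𝔠 is a Gorenstein (Artinian) ring if and only if K² = K³ and μ_R(K²/K) = 1. -/

import Mathlib

/-!
By the duality `K : (K : F) = F` (extended by scaling to fractional ideals containing a
nonzerodivisor of the conductor), `I ↦ K : I` is an inclusion-reversing bijection from the
ideals of `R/𝔠` onto the `R`-modules between `K` and `S = R[K]`. It sends `0` to `S` and the
socle `(𝔠 : 𝔪)/𝔠` to `𝔪S + K`; so `R/𝔠` is Artinian, and it is Gorenstein iff `S` covers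
`𝔪S + K`, i.e. (Nakayama) iff `S/K` is cyclic. If so, a generator can be chosen in `K²`, since
otherwise `𝔪S + K` would be a ring containing `K`; hence `S = K²` and `K² = K³`. Conversely
`K² = K³` makes `K²` a ring, so `S = K²`.
-/

open IsLocalRing

/-- The length of a module, as the Krull dimension of its submodule lattice. -/
noncomputable def moduleLength (R M : Type*) [Ring R] [AddCommGroup M] [Module R M] : ℕ∞ :=
  WithBot.unbotD 0 (Order.krullDim (Submodule R M))

/-- `K` is a fractional canonical ideal of `R` (inside a total quotient ring `Q`):
`R ⊆ K ⊆ \bar R` and `K ≅ K_R`, the latter expressed through the Herzog–Kunz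
double-annihilator characterization of canonical fractional ideals. -/
def IsFracCanonical (R Q : Type*) [CommRing R] [CommRing Q] [Algebra R Q]
    (K : Submodule R Q) : Prop :=
  K.FG ∧ (1 : Submodule R Q) ≤ K ∧
    K ≤ Subalgebra.toSubmodule (integralClosure R Q) ∧
    ∀ F : Submodule R Q, F.FG → (1 : Submodule R Q) ≤ F → K / (K / F) = F

/-- The conductor ideal `𝔠 = R : R[K]` of `R`. -/
noncomputable def condIdeal (R Q : Type*) [CommRing R] [CommRing Q] [Algebra R Q]
    (K : Submodule R Q) : Ideal R :=
  Submodule.comap (Algebra.linearMap R Q)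
    ((1 : Submodule R Q) / (Subalgebra.toSubmodule (Algebra.adjoin R (K : Set Q))))

/-- An Artinian Gorenstein ring: an Artinian local ring whose socle
(the annihilator of the maximal ideal, here the Jacobson radical) has length one. -/
def IsArtinianGorensteinRing (B : Type*) [CommRing B] : Prop :=
  IsArtinianRing B ∧ IsLocalRing B ∧
    moduleLength B
      ↥(Submodule.colon (⊥ : Submodule B B) (Ideal.jacobson (⊥ : Ideal B))) = 1

open Submodule

namespace Submodule

variable {R A : Type*} [CommRing R] [CommRing A] [Algebra R A]

lemma div_mul_eq_div_div (X Y Z : Submodule R A) : X / (Y * Z) = X / Y / Z :=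
  eq_of_forall_le_iff fun W => by
    rw [le_div_iff_mul_le, le_div_iff_mul_le, le_div_iff_mul_le, mul_right_comm, mul_assoc]

protected lemma div_one (X : Submodule R A) : X / 1 = X :=
  eq_of_forall_le_iff fun W => by rw [le_div_iff_mul_le, mul_one]

lemma div_le_div_left (X : Submodule R A) {U V : Submodule R A} (h : U ≤ V) : X / V ≤ X / U :=
  le_div_iff_mul_le.2 <| (mul_le_mul_right h _).trans (le_div_iff_mul_le.1 le_rfl)

lemma div_sup (X U V : Submodule R A) : X / (U ⊔ V) = X / U ⊓ X / V :=
  eq_of_forall_le_iff fun W => by simp only [le_inf_iff, le_div_iff_mul_le, mul_sup, sup_le_iff]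

lemma div_units_mul (X Y : Submodule R A) (T : (Submodule R A)ˣ) :
    X / (T * Y) = ↑T⁻¹ * (X / Y) :=
  eq_of_forall_le_iff fun W => by
    rw [le_div_iff_mul_le, ← mul_assoc, ← le_div_iff_mul_le]
    constructor
    · intro h
      simpa only [mul_comm W, Units.inv_mul_cancel_left] using mul_le_mul_right h ↑T⁻¹
    · intro h
      simpa only [mul_comm W, Units.mul_inv_cancel_left] using mul_le_mul_right h ↑T

lemma div_div_eq_of_isUnit_mem {K : Submodule R A}
    (hK : ∀ F : Submodule R A, F.FG → 1 ≤ F → K / (K / F) = F)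
    {U : Submodule R A} (hU : U.FG) {u : A} (hu : IsUnit u) (huU : u ∈ U) :
    K / (K / U) = U := by
  -- apply the duality to `u⁻¹ U`, which contains `1`
  set T := (hu.map (spanSingleton R)).unit
  have hTU : (T : Submodule R A) ≤ U := by
    simpa [T, span_singleton_le_iff_mem] using huU
  have h1 : 1 ≤ ↑T⁻¹ * U := by
    simpa using mul_le_mul_right hTU ↑T⁻¹
  have hdual := hK _ ((fg_unit T⁻¹).mul hU) h1
  rw [div_units_mul, inv_inv, div_units_mul] at hdual
  exact (Units.mul_right_inj _).1 hdual

lemma ideal_smul_eq_coeSubmodule_mul (I : Ideal R) (N : Submodule R A) :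
    I • N = IsLocalization.coeSubmodule A I * N := by
  apply le_antisymm
  · exact smul_le.2 fun r hr n hn =>
      (Algebra.smul_def r n).symm ▸ mul_mem_mul (mem_map_of_mem hr) hn
  · exact mul_le.2 fun _ ⟨r, hr, h⟩ n hn => h ▸ (Algebra.smul_def r n) ▸ smul_mem_smul hr hn

end Submodule

section LocalModule

variable {R M : Type*} [CommRing R] [AddCommGroup M] [Module R M]

lemma exists_span_singleton_eq_top_iff {K N : Submodule R M} (hKN : K ≤ N) :
    (∃ ξ : N ⧸ K.comap N.subtype, ξ ≠ 0 ∧ span R {ξ} = ⊤) ↔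
      ∃ f ∈ N, f ∉ K ∧ K ⊔ span R {f} = N := by
  have key (x : N) : span R {(K.comap N.subtype).mkQ x} = ⊤ ↔ K ⊔ span R {(x : M)} = N := by
    rw [← Set.image_singleton, ← map_span, Submodule.map_mkQ_eq_top,
      ← (map_injective_of_injective N.injective_subtype).eq_iff, Submodule.map_sup,
      map_comap_subtype, map_subtype_top, map_span, Set.image_singleton, inf_eq_right.2 hKN,
      subtype_apply]
  constructor
  · rintro ⟨ξ, hξ, hspan⟩
    obtain ⟨x, rfl⟩ := (K.comap N.subtype).mkQ_surjective ξ
    refine ⟨x, x.2, fun hx => hξ ?_, (key x).1 hspan⟩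
    rwa [mkQ_apply, Quotient.mk_eq_zero]
  · rintro ⟨f, hfN, hfK, hspan⟩
    refine ⟨(K.comap N.subtype).mkQ ⟨f, hfN⟩, fun h => hfK ?_, (key _).2 hspan⟩
    rwa [mkQ_apply, Quotient.mk_eq_zero] at h

variable [IsLocalRing R] {K S : Submodule R M} {f : M}

lemma sup_span_singleton_eq_of_covBy (hS : S.FG) (hKS : K ≤ S)
    (hcov : maximalIdeal R • S ⊔ K ⋖ S) (hfS : f ∈ S) (hf : f ∉ maximalIdeal R • S ⊔ K) :
    K ⊔ span R {f} = S := by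
  have hfS' : span R {f} ≤ S := (span_singleton_le_iff_mem f S).2 hfS
  have hlt : maximalIdeal R • S ⊔ K < maximalIdeal R • S ⊔ K ⊔ span R {f} :=
    left_lt_sup.2 fun h => hf (h (mem_span_singleton_self f))
  have heq := (hcov.eq_or_eq hlt.le (sup_le hcov.le hfS')).resolve_left hlt.ne'
  refine le_antisymm (sup_le hKS hfS') (le_of_le_smul_of_le_jacobson_bot hS
    (jacobson_eq_maximalIdeal ⊥ bot_ne_top).ge (heq.symm.le.trans ?_))
  exact sup_le (sup_le le_sup_right (le_sup_left.trans le_sup_left))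
    (le_sup_right.trans le_sup_left)

lemma covBy_of_sup_span_singleton_eq (hS : S.FG) (hKf : K ⊔ span R {f} = S) (hfK : f ∉ K) :
    maximalIdeal R • S ⊔ K ⋖ S := by
  have hKS : K ≤ S := hKf ▸ le_sup_left
  have hfS : f ∈ S := hKf ▸ mem_sup_right (mem_span_singleton_self f)
  refine covBy_iff_lt_and_eq_or_eq.2 ⟨lt_of_le_of_ne (sup_le smul_le_right hKS) fun h => hfK ?_,
    fun U hU hUS => ?_⟩
  · exact le_of_le_smul_of_le_jacobson_bot hS (jacobson_eq_maximalIdeal ⊥ bot_ne_top).ge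
      (h.symm.le.trans_eq (sup_comm _ _)) hfS
  · by_cases hfU : f ∈ U
    · exact .inr (le_antisymm hUS (hKf ▸ sup_le (le_sup_right.trans hU)
        ((span_singleton_le_iff_mem f U).2 hfU)))
    refine .inl (le_antisymm (fun x hx => ?_) hU)
    obtain ⟨k, hk, y, hy, rfl⟩ := mem_sup.1 (hKf ▸ hUS hx)
    obtain ⟨r, rfl⟩ := mem_span_singleton.1 hy
    have hr : r ∈ maximalIdeal R := by
      by_contra hr
      have hrf : r • f ∈ U := by simpa using U.sub_mem hx (hU (mem_sup_right hk))
      exact hfU ((U.smul_mem_iff_of_isUnit (IsLocalRing.notMem_maximalIdeal.1 hr)).1 hrf)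
    exact add_mem (mem_sup_right hk) (mem_sup_left (smul_mem_smul hr hfS))

end LocalModule

lemma moduleLength_eq_length (R M : Type*) [Ring R] [AddCommGroup M] [Module R M] :
    moduleLength R M = Module.length R M := by
  rw [moduleLength, ← Module.coe_length, WithBot.unbotD_coe]

lemma moduleLength_eq_one_iff_isAtom {R M : Type*} [Ring R] [AddCommGroup M] [Module R M]
    (N : Submodule R M) : moduleLength R N = 1 ↔ IsAtom N := by
  rw [moduleLength_eq_length, Module.length_eq_one_iff, isSimpleModule_iff_isAtom]

lemma Ideal.comap_mk_colon_jacobson_bot {R : Type*} [CommRing R] [IsLocalRing R] {I : Ideal R}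
    (hI : I ≠ ⊤) :
    (Submodule.colon (⊥ : Submodule (R ⧸ I) (R ⧸ I)) (Ideal.jacobson (⊥ : Ideal (R ⧸ I)))).comap
      (Ideal.Quotient.mk I) = I.colon (maximalIdeal R : Set R) := by
  have : Nontrivial (R ⧸ I) := Ideal.Quotient.nontrivial_iff.2 hI
  have : IsLocalRing (R ⧸ I) := .of_surjective' _ Ideal.Quotient.mk_surjective
  rw [IsLocalRing.jacobson_eq_maximalIdeal ⊥ bot_ne_top,
    ← IsLocalRing.map_maximalIdeal_of_surjective _ Ideal.Quotient.mk_surjective]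
  ext r
  rw [Ideal.mem_comap, Submodule.mem_colon, Submodule.mem_colon]
  constructor
  · intro h z hz
    simpa [← map_mul, Ideal.Quotient.eq_zero_iff_mem] using h _ (Ideal.mem_map_of_mem _ hz)
  · intro h s hs
    obtain ⟨z, hz, rfl⟩ := (Ideal.mem_map_iff_of_surjective _ Ideal.Quotient.mk_surjective).1 hs
    simpa [← map_mul, Ideal.Quotient.eq_zero_iff_mem] using h z hz

section Adjoin

variable {R A : Type*} [CommRing R] [CommRing A] [Algebra R A]

abbrev adjoinSubmodule (K : Submodule R A) : Submodule R A :=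
  Subalgebra.toSubmodule (Algebra.adjoin R (K : Set A))

variable {K : Submodule R A}

lemma le_adjoinSubmodule : K ≤ adjoinSubmodule K := fun _ hx => Algebra.subset_adjoin hx

lemma one_le_adjoinSubmodule : 1 ≤ adjoinSubmodule K := one_le.2 (Subalgebra.one_mem _)

lemma adjoinSubmodule_mul_self_le : adjoinSubmodule K * adjoinSubmodule K ≤ adjoinSubmodule K :=
  mul_le.2 fun _ hx _ hy => Subalgebra.mul_mem _ hx hy

lemma sq_le_adjoinSubmodule : K ^ 2 ≤ adjoinSubmodule K :=
  (pow_two K).symm ▸ (mul_le_mul' le_adjoinSubmodule le_adjoinSubmodule).trans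
    adjoinSubmodule_mul_self_le

lemma adjoinSubmodule_le {U : Submodule R A} (h1 : 1 ≤ U) (hKU : K ≤ U) (hU : U * U ≤ U) :
    adjoinSubmodule K ≤ U := fun _ hx =>
  Algebra.adjoin_le (S := U.toSubalgebra (one_le.1 h1) fun _ _ hx hy => hU (mul_mem_mul hx hy))
    hKU hx

lemma adjoinSubmodule_fg (hK : K.FG) (hint : K ≤ Subalgebra.toSubmodule (integralClosure R A)) :
    (adjoinSubmodule K).FG := by
  obtain ⟨s, rfl⟩ := hK
  rw [adjoinSubmodule, Algebra.adjoin_span]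
  exact fg_adjoin_of_finite s.finite_toSet fun x hx => hint (subset_span hx)

lemma adjoinSubmodule_eq_sq (hK1 : 1 ≤ K) (h : K ^ 2 = K ^ 3) : adjoinSubmodule K = K ^ 2 := by
  have hK : K ≤ K ^ 2 := le_self_pow hK1 two_ne_zero
  refine le_antisymm (adjoinSubmodule_le (hK1.trans hK) hK ?_) sq_le_adjoinSubmodule
  rw [← pow_add, show 2 + 2 = 3 + 1 from rfl, pow_succ, ← h, ← pow_succ, ← h]

lemma smul_sup_mul_self_le (I : Ideal R) {S : Submodule R A} (hS : S * S ≤ S) (hKS : K ≤ S)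
    (hKK : K * K ≤ I • S ⊔ K) : (I • S ⊔ K) * (I • S ⊔ K) ≤ I • S ⊔ K := by
  have hIS {X : Submodule R A} (hX : X ≤ S) : I • S * X ≤ I • S := by
    rw [ideal_smul_eq_coeSubmodule_mul, mul_assoc]
    exact mul_le_mul_right ((mul_le_mul_right hX S).trans hS) _
  rw [Submodule.sup_mul, Submodule.mul_sup, Submodule.mul_sup]
  refine sup_le (sup_le ?_ ?_) (sup_le ?_ hKK)
  · exact (hIS smul_le_right).trans le_sup_left
  · exact (hIS hKS).trans le_sup_left
  · exact (mul_comm K _ ▸ hIS hKS).trans le_sup_left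

theorem covBy_adjoinSubmodule_iff [IsLocalRing R] (hS : (adjoinSubmodule K).FG) (hK1 : 1 ≤ K) :
    maximalIdeal R • adjoinSubmodule K ⊔ K ⋖ adjoinSubmodule K ↔
      K ^ 2 = K ^ 3 ∧ ∃ ξ : ↥(K ^ 2) ⧸ K.comap (K ^ 2).subtype, ξ ≠ 0 ∧ span R {ξ} = ⊤ := by
  have hK2 : K ≤ K ^ 2 := le_self_pow hK1 two_ne_zero
  constructor
  · intro hcov
    have hnot : ¬ K ^ 2 ≤ maximalIdeal R • adjoinSubmodule K ⊔ K := fun h =>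
      hcov.lt.not_ge <| adjoinSubmodule_le (hK1.trans le_sup_right) le_sup_right <|
        smul_sup_mul_self_le _ adjoinSubmodule_mul_self_le le_adjoinSubmodule (pow_two K ▸ h)
    obtain ⟨f, hf2, hf⟩ := SetLike.not_le_iff_exists.1 hnot
    have hKf := sup_span_singleton_eq_of_covBy hS le_adjoinSubmodule hcov
      (sq_le_adjoinSubmodule hf2) hf
    have hS2 : adjoinSubmodule K = K ^ 2 := le_antisymm
      (hKf ▸ sup_le hK2 ((span_singleton_le_iff_mem _ _).2 hf2)) sq_le_adjoinSubmodule
    refine ⟨le_antisymm (pow_le_pow_right' hK1 (by norm_num)) ?_,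
      (exists_span_singleton_eq_top_iff hK2).2 ⟨f, hf2, fun h => hf (mem_sup_right h), hS2 ▸ hKf⟩⟩
    calc K ^ 3 = K ^ 2 * K := pow_succ K 2
      _ ≤ adjoinSubmodule K * adjoinSubmodule K :=
        mul_le_mul' sq_le_adjoinSubmodule le_adjoinSubmodule
      _ ≤ K ^ 2 := hS2 ▸ adjoinSubmodule_mul_self_le
  · rintro ⟨h23, hgen⟩
    obtain ⟨f, -, hfK, hKf⟩ := (exists_span_singleton_eq_top_iff hK2).1 hgen
    rw [adjoinSubmodule_eq_sq hK1 h23] at hS ⊢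
    exact covBy_of_sup_span_singleton_eq hS hKf hfK

end Adjoin

section Conductor

open IsLocalization OrderDual

variable {R Q : Type*} [CommRing R] [CommRing Q] [Algebra R Q] {K : Submodule R Q}

lemma coeSubmodule_comap_of_le_one {X : Submodule R Q} (hX : X ≤ 1) :
    coeSubmodule Q (X.comap (Algebra.linearMap R Q)) = X := by
  rw [coeSubmodule, map_comap_eq, ← one_eq_range, inf_eq_right.2 hX]

lemma coeSubmodule_colon (hinj : Function.Injective (algebraMap R Q)) (J I : Ideal R) :
    coeSubmodule Q (J.colon (I : Set R)) = coeSubmodule Q J / coeSubmodule Q I ⊓ 1 := by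
  ext x
  simp only [mem_coeSubmodule, mem_inf, mem_one, mem_div_iff_forall_mul_mem, mem_colon, smul_eq_mul]
  constructor
  · rintro ⟨r, hr, rfl⟩
    exact ⟨fun _ ⟨z, hz, hzx⟩ => ⟨r * z, hr z hz, by rw [← hzx, map_mul]⟩, r, rfl⟩
  · rintro ⟨hx, r, rfl⟩
    refine ⟨r, fun z hz => ?_, rfl⟩
    obtain ⟨y, hy, hyrz⟩ := hx _ ⟨z, hz, rfl⟩
    rwa [← hinj (hyrz.trans (map_mul _ r z).symm)]

lemma condIdeal_ne_top (hK1 : 1 ≤ K) (hNG : K ≠ 1) : condIdeal R Q K ≠ ⊤ := by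
  intro htop
  have h1 := mem_comap.1 (htop ▸ mem_top : (1 : R) ∈ condIdeal R Q K)
  rw [Algebra.linearMap_apply, map_one, one_mem_div] at h1
  exact hNG (le_antisymm (le_adjoinSubmodule.trans h1) hK1)

lemma exists_mem_condIdeal_mem_nonZeroDivisors [IsFractionRing R Q]
    (hS : (adjoinSubmodule K).FG) : ∃ a ∈ condIdeal R Q K, a ∈ nonZeroDivisors R := by
  obtain ⟨a, ha, hint⟩ := FractionalIdeal.isFractional_of_fg (S := nonZeroDivisors R) hS
  refine ⟨a, fun s hs => ?_, ha⟩
  obtain ⟨r, hr⟩ := hint s hs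
  exact mem_one.2 ⟨r, hr.trans (Algebra.smul_def a s)⟩

lemma condIdeal_le_comap_mk (I : Ideal (R ⧸ condIdeal R Q K)) :
    condIdeal R Q K ≤ I.comap (Ideal.Quotient.mk _) :=
  Ideal.mk_ker.ge.trans (Ideal.comap_mono bot_le)

namespace IsFracCanonical

lemma div_self (hK : IsFracCanonical R Q K) : K / K = 1 := by
  simpa only [Submodule.div_one] using
    hK.2.2.2 1 (one_eq_span (R := R) (A := Q) ▸ fg_span_singleton 1) le_rfl

lemma adjoinSubmodule_fg (hK : IsFracCanonical R Q K) : (adjoinSubmodule K).FG :=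
  _root_.adjoinSubmodule_fg hK.1 hK.2.2.1

lemma div_adjoinSubmodule (hK : IsFracCanonical R Q K) :
    K / adjoinSubmodule K = 1 / adjoinSubmodule K := by
  refine le_antisymm (Submodule.le_div_iff_mul_le.2 ?_) fun x hx y hy => hK.2.1 (hx y hy)
  rw [← hK.div_self, Submodule.le_div_iff_mul_le, mul_assoc]
  exact (mul_le_mul_right ((mul_le_mul_right le_adjoinSubmodule _).trans
    adjoinSubmodule_mul_self_le) _).trans (Submodule.le_div_iff_mul_le.1 le_rfl)

lemma coeSubmodule_condIdeal (hK : IsFracCanonical R Q K) :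
    coeSubmodule Q (condIdeal R Q K) = K / adjoinSubmodule K := by
  rw [hK.div_adjoinSubmodule]
  exact coeSubmodule_comap_of_le_one
    ((div_le_div_left 1 one_le_adjoinSubmodule).trans_eq (Submodule.div_one 1))

lemma div_coeSubmodule_mem_Icc (hK : IsFracCanonical R Q K) {J : Ideal R}
    (hJ : condIdeal R Q K ≤ J) : K / coeSubmodule Q J ∈ Set.Icc K (adjoinSubmodule K) := by
  refine ⟨(Submodule.div_one K).symm.trans_le (div_le_div_left K ?_), ?_⟩
  · exact (coeSubmodule_mono Q le_top).trans_eq (coeSubmodule_top Q)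
  · have := div_le_div_left K (coeSubmodule_mono Q hJ)
    rwa [hK.coeSubmodule_condIdeal, hK.2.2.2 _ hK.adjoinSubmodule_fg one_le_adjoinSubmodule] at this

variable [IsNoetherianRing R] [IsFractionRing R Q]

lemma div_div_coeSubmodule (hK : IsFracCanonical R Q K) {J : Ideal R}
    (hJ : condIdeal R Q K ≤ J) : K / (K / coeSubmodule Q J) = coeSubmodule Q J := by
  obtain ⟨a, hac, ha⟩ := exists_mem_condIdeal_mem_nonZeroDivisors hK.adjoinSubmodule_fg
  exact div_div_eq_of_isUnit_mem hK.2.2.2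
    ((coeSubmodule_fg _ (IsFractionRing.injective R Q) J).2 (IsNoetherian.noetherian J))
    (IsLocalization.map_units Q ⟨a, ha⟩) (mem_map_of_mem (hJ hac))

lemma div_coeSubmodule_le_iff (hK : IsFracCanonical R Q K) {J J' : Ideal R}
    (hJ : condIdeal R Q K ≤ J) (hJ' : condIdeal R Q K ≤ J') :
    K / coeSubmodule Q J ≤ K / coeSubmodule Q J' ↔ J' ≤ J := by
  refine ⟨fun h => ?_, fun h => div_le_div_left K (coeSubmodule_mono Q h)⟩
  have := div_le_div_left K h
  rwa [hK.div_div_coeSubmodule hJ, hK.div_div_coeSubmodule hJ',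
    coeSubmodule_le_coeSubmodule le_rfl] at this

noncomputable def dualEmbedding (hK : IsFracCanonical R Q K) :
    Ideal (R ⧸ condIdeal R Q K) ↪o (Submodule R Q)ᵒᵈ :=
  OrderEmbedding.ofMapLEIff (fun I => toDual (K / coeSubmodule Q (I.comap (Ideal.Quotient.mk _))))
    fun I J =>
      (hK.div_coeSubmodule_le_iff (condIdeal_le_comap_mk J) (condIdeal_le_comap_mk I)).trans
        (Ideal.comap_le_comap_iff_of_surjective _ Ideal.Quotient.mk_surjective I J)

lemma dualEmbedding_apply (hK : IsFracCanonical R Q K) (I : Ideal (R ⧸ condIdeal R Q K)) :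
    hK.dualEmbedding I = toDual (K / coeSubmodule Q (I.comap (Ideal.Quotient.mk _))) :=
  rfl

lemma dualEmbedding_bot (hK : IsFracCanonical R Q K) :
    hK.dualEmbedding ⊥ = toDual (adjoinSubmodule K) := by
  rw [dualEmbedding_apply, ← RingHom.ker_eq_comap_bot, Ideal.mk_ker, hK.coeSubmodule_condIdeal,
    hK.2.2.2 _ hK.adjoinSubmodule_fg one_le_adjoinSubmodule]

lemma range_dualEmbedding (hK : IsFracCanonical R Q K) :
    Set.range hK.dualEmbedding = Set.Icc (toDual (adjoinSubmodule K)) (toDual K) := by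
  ext U
  constructor
  · rintro ⟨I, rfl⟩
    obtain ⟨hKI, hIS⟩ := hK.div_coeSubmodule_mem_Icc (condIdeal_le_comap_mk I)
    exact ⟨hIS, hKI⟩
  · rintro ⟨hUS, hKU⟩
    have hU1 : K / ofDual U ≤ 1 := hK.div_self ▸ div_le_div_left K hKU
    set J := (K / ofDual U).comap (Algebra.linearMap R Q)
    have hJ : coeSubmodule Q J = K / ofDual U := coeSubmodule_comap_of_le_one hU1
    have hcJ : condIdeal R Q K ≤ J := by
      rw [← coeSubmodule_le_coeSubmodule (S := Q) le_rfl, hJ, hK.coeSubmodule_condIdeal]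
      exact div_le_div_left K hUS
    refine ⟨Ideal.map (Ideal.Quotient.mk _) J, ?_⟩
    rw [dualEmbedding_apply, Ideal.comap_map_mk hcJ, hJ,
      hK.2.2.2 (ofDual U) (hK.adjoinSubmodule_fg.of_le hUS) (hK.2.1.trans hKU), toDual_ofDual]

theorem isArtinianRing_quotient (hK : IsFracCanonical R Q K) :
    IsArtinianRing (R ⧸ condIdeal R Q K) := by
  have hle (I : Ideal (R ⧸ condIdeal R Q K)) : ofDual (hK.dualEmbedding I) ≤ adjoinSubmodule K :=
    (hK.div_coeSubmodule_mem_Icc (condIdeal_le_comap_mk I)).2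
  have := (isNoetherian_of_fg_of_noetherian _ hK.adjoinSubmodule_fg).wellFoundedGT
  have hanti : StrictAnti fun I => (adjoinSubmodule K).mapIic.symm ⟨_, hle I⟩ :=
    fun _ _ hIJ => (adjoinSubmodule K).mapIic.symm.strictMono (hK.dualEmbedding.strictMono hIJ)
  exact hanti.wellFoundedLT

lemma dualEmbedding_socle [IsLocalRing R] (hK : IsFracCanonical R Q K)
    (hc : condIdeal R Q K ≠ ⊤) :
    hK.dualEmbedding (Submodule.colon (⊥ : Submodule (R ⧸ condIdeal R Q K) (R ⧸ condIdeal R Q K))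
      (Ideal.jacobson (⊥ : Ideal (R ⧸ condIdeal R Q K)))) =
      toDual (maximalIdeal R • adjoinSubmodule K ⊔ K) := by
  have hU : maximalIdeal R • adjoinSubmodule K ⊔ K ≤ adjoinSubmodule K :=
    sup_le smul_le_right le_adjoinSubmodule
  -- `K : (𝔪S + K) = (K : S : 𝔪) ∩ (K : K) = (𝔠 : 𝔪) ∩ R`
  rw [dualEmbedding_apply, Ideal.comap_mk_colon_jacobson_bot hc,
    coeSubmodule_colon (IsFractionRing.injective R Q), hK.coeSubmodule_condIdeal,
    ← hK.div_self, ← Submodule.div_mul_eq_div_div, mul_comm, ← ideal_smul_eq_coeSubmodule_mul,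
    ← Submodule.div_sup,
    hK.2.2.2 _ (hK.adjoinSubmodule_fg.of_le hU) (hK.2.1.trans le_sup_right)]

theorem isAtom_socle_iff_covBy [IsLocalRing R] (hK : IsFracCanonical R Q K)
    (hc : condIdeal R Q K ≠ ⊤) :
    IsAtom (Submodule.colon (⊥ : Submodule (R ⧸ condIdeal R Q K) (R ⧸ condIdeal R Q K))
      (Ideal.jacobson (⊥ : Ideal (R ⧸ condIdeal R Q K)))) ↔
      maximalIdeal R • adjoinSubmodule K ⊔ K ⋖ adjoinSubmodule K := by
  have hconn : (Set.range hK.dualEmbedding).OrdConnected :=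
    hK.range_dualEmbedding ▸ Set.ordConnected_Icc
  rw [← bot_covBy_iff, ← hconn.apply_covBy_apply_iff, hK.dualEmbedding_bot,
    hK.dualEmbedding_socle hc, toDual_covBy_toDual_iff]

end IsFracCanonical

end Conductor

theorem quotient_by_conductor_gorenstein_iff_general
    (R : Type*) [CommRing R] [IsNoetherianRing R] [IsLocalRing R]
    (K : Submodule R (FractionRing R)) (hK : IsFracCanonical R (FractionRing R) K)
    (hNG : K ≠ 1) :
    IsArtinianGorensteinRing (R ⧸ condIdeal R (FractionRing R) K) ↔
      (K ^ 2 = K ^ 3 ∧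
        ∃ ξ : ↥(K ^ 2) ⧸ Submodule.comap (K ^ 2).subtype K,
          ξ ≠ 0 ∧ Submodule.span R {ξ} = ⊤) := by
  have hc := condIdeal_ne_top hK.2.1 hNG
  have : Nontrivial (R ⧸ condIdeal R (FractionRing R) K) := Ideal.Quotient.nontrivial_iff.2 hc
  rw [IsArtinianGorensteinRing, moduleLength_eq_one_iff_isAtom, hK.isAtom_socle_iff_covBy hc,
    covBy_adjoinSubmodule_iff hK.adjoinSubmodule_fg hK.2.1,
    and_iff_right hK.isArtinianRing_quotient,
    and_iff_right (.of_surjective' _ Ideal.Quotient.mk_surjective)]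

/-- For a one-dimensional non-Gorenstein Cohen–Macaulay local ring `R` with fractional
canonical ideal `K`, `S = R[K]` and `𝔠 = R : S`: the ring `R/𝔠` is Gorenstein iff
`K² = K³` and `μ_R(K²/K) = 1`. -/
theorem quotient_by_conductor_gorenstein_iff
    (R : Type*) [CommRing R] [IsNoetherianRing R] [IsLocalRing R]
    (hdim : ringKrullDim R = 1)
    (hCM : ∃ x ∈ maximalIdeal R, x ∈ nonZeroDivisors R)
    (K : Submodule R (FractionRing R)) (hK : IsFracCanonical R (FractionRing R) K)
    (hNG : K ≠ 1) :
    IsArtinianGorensteinRing (R ⧸ condIdeal R (FractionRing R) K) ↔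
      (K ^ 2 = K ^ 3 ∧
        ∃ ξ : ↥(K ^ 2) ⧸ Submodule.comap (K ^ 2).subtype K,
          ξ ≠ 0 ∧ Submodule.span R {ξ} = ⊤) :=
  quotient_by_conductor_gorenstein_iff_general R K hK hNG
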